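/- The dual of an M-embedded Banach space is L-embedded. -/

import Mathlib

open NormedSpace Filter Topology

/-- A sequence spans `ℓ¹` asymptotically isometrically. -/
def SpansL1Asymptotically {X : Type*} [NormedAddCommGroup X] [NormedSpace ℝ X]
    (x : ℕ → X) : Prop :=
  ∃ δ : ℕ → ℝ, (∀ n, 0 ≤ δ n ∧ δ n < 1) ∧ Tendsto δ atTop (nhds 0) ∧
    ∀ (N : ℕ) (α : ℕ → ℝ),
      (∑ n ∈ Finset.range N, (1 - δ n) * |α n|) ≤ ‖∑ n ∈ Finset.range N, α n • x n‖ ∧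
      ‖∑ n ∈ Finset.range N, α n • x n‖ ≤ ∑ n ∈ Finset.range N, |α n|

/-- A sequence spans `ℓ¹` almost isometrically. -/
def SpansL1AlmostIsometrically {X : Type*} [NormedAddCommGroup X] [NormedSpace ℝ X]
    (x : ℕ → X) : Prop :=
  ∃ δ : ℕ → ℝ, (∀ n, 0 ≤ δ n ∧ δ n < 1) ∧ Tendsto δ atTop (nhds 0) ∧
    ∀ (m M : ℕ) (α : ℕ → ℝ),
      (1 - δ m) * (∑ n ∈ Finset.Icc m M, |α n|) ≤ ‖∑ n ∈ Finset.Icc m M, α n • x n‖ ∧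
      ‖∑ n ∈ Finset.Icc m M, α n • x n‖ ≤ ∑ n ∈ Finset.Icc m M, |α n|

/-- A sequence spans `c₀` asymptotically isometrically. -/
def SpansC0Asymptotically {X : Type*} [NormedAddCommGroup X] [NormedSpace ℝ X]
    (z : ℕ → X) : Prop :=
  ∃ δ : ℕ → ℝ, (∀ n, 0 ≤ δ n ∧ δ n < 1) ∧ Tendsto δ atTop (nhds 0) ∧
    ∀ (N : ℕ) (hN : N ≠ 0) (α : ℕ → ℝ),
      ((Finset.range N).sup' (Finset.nonempty_range_iff.mpr hN)
          (fun n => (1 - δ n) * |α n|)) ≤ ‖∑ n ∈ Finset.range N, α n • z n‖ ∧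
      ‖∑ n ∈ Finset.range N, α n • z n‖ ≤
        (Finset.range N).sup' (Finset.nonempty_range_iff.mpr hN)
          (fun n => (1 + δ n) * |α n|)

/-- `P` is an L-projection: an idempotent bounded operator with
`‖ξ‖ = ‖Pξ‖ + ‖ξ - Pξ‖` for all `ξ`. -/
def IsLProjection {E : Type*} [NormedAddCommGroup E] [NormedSpace ℝ E]
    (P : E →L[ℝ] E) : Prop :=
  (∀ ξ, P (P ξ) = P ξ) ∧ ∀ ξ, ‖ξ‖ = ‖P ξ‖ + ‖ξ - P ξ‖

noncomputable instance instNACGStrongDualReal (E : Type*) [NormedAddCommGroup E] [NormedSpace ℝ E] :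
    NormedAddCommGroup (StrongDual ℝ E) := ContinuousLinearMap.toNormedAddCommGroup

noncomputable instance instNSStrongDualReal (E : Type*) [NormedAddCommGroup E] [NormedSpace ℝ E] :
    NormedSpace ℝ (StrongDual ℝ E) := ContinuousLinearMap.toNormedSpace

/-- `X` is L-embedded: the canonical image of `X` in its bidual is the range of an
L-projection. -/
def IsLEmbedded (X : Type*) [NormedAddCommGroup X] [NormedSpace ℝ X] : Prop :=
  ∃ P : StrongDual ℝ (StrongDual ℝ X) →L[ℝ] StrongDual ℝ (StrongDual ℝ X),
    (∀ ξ, P (P ξ) = P ξ) ∧ (∀ ξ, ‖ξ‖ = ‖P ξ‖ + ‖ξ - P ξ‖) ∧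
      Set.range P = Set.range (inclusionInDoubleDual ℝ X)

/-- `X` is M-embedded: the annihilator of `X` in `X'''` is the range of an
L-projection on `X'''`. -/
def IsMEmbedded (X : Type*) [NormedAddCommGroup X] [NormedSpace ℝ X] : Prop :=
  ∃ P : StrongDual ℝ (StrongDual ℝ (StrongDual ℝ X)) →L[ℝ] StrongDual ℝ (StrongDual ℝ (StrongDual ℝ X)),
    (∀ φ, P (P φ) = P φ) ∧ (∀ φ, ‖φ‖ = ‖P φ‖ + ‖φ - P φ‖) ∧
      Set.range P = {φ | ∀ x : X, φ (inclusionInDoubleDual ℝ X x) = 0}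

/-- `X` fails the fixed point property: there are a nonempty closed bounded convex set and
a contractive self-map without fixed point. -/
def FailsFPP (X : Type*) [NormedAddCommGroup X] [NormedSpace ℝ X] : Prop :=
  ∃ C : Set X, C.Nonempty ∧ IsClosed C ∧ Bornology.IsBounded C ∧ Convex ℝ C ∧
    ∃ f : X → X, Set.MapsTo f C C ∧
      (∀ x ∈ C, ∀ y ∈ C, x ≠ y → ‖f x - f y‖ < ‖x - y‖) ∧
      ∀ x ∈ C, f x ≠ x

/-!
Let `P` be the L-projection of `X'''` onto `X^⊥`; then `Q = I - P` is an L-projection as well.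
For `ψ ∈ X'`, the functional `ψ̂ - P ψ̂` still restricts to `ψ` on `X`, so
`‖ψ̂ - P ψ̂‖ ≥ ‖ψ‖ = ‖ψ̂‖`, and the identity `‖ψ̂‖ = ‖P ψ̂‖ + ‖ψ̂ - P ψ̂‖` forces `P ψ̂ = 0`.
Conversely, for every `φ` the difference between `Q φ` and the canonical image of its restriction
to `X` lies both in `X^⊥ = range P` and in `ker P`, hence vanishes. So `range Q = X'`.
-/

namespace IsLProjection

variable {E : Type*} [NormedAddCommGroup E] [NormedSpace ℝ E] {P : E →L[ℝ] E}

theorem id_sub (hP : IsLProjection P) : IsLProjection (ContinuousLinearMap.id ℝ E - P) := by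
  refine ⟨fun e => ?_, fun e => ?_⟩
  · simp only [sub_apply, ContinuousLinearMap.id_apply, map_sub, hP.1, sub_self,
      sub_zero]
  · simp only [sub_apply, ContinuousLinearMap.id_apply, sub_sub_cancel]
    rw [hP.2 e, norm_sub_rev, add_comm]

/-- The L-decomposition `‖e‖ = ‖P e‖ + ‖e - P e‖` leaves no room for `P e` once a contraction
vanishing on the range of `P` already sees all of `‖e‖`. -/
theorem apply_eq_zero_of_norm_le {F G : Type*} [SeminormedAddCommGroup F] [FunLike G E F]
    [AddMonoidHomClass G E F] (hP : IsLProjection P) {R : G} (hR : ∀ e, ‖R e‖ ≤ ‖e‖)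
    (hRP : ∀ e, R (P e) = 0) {e : E} (he : ‖e‖ ≤ ‖R e‖) : P e = 0 := by
  have hRe : ‖R e‖ ≤ ‖e - P e‖ := by
    simpa only [map_sub, hRP, sub_zero] using hR (e - P e)
  have hPe : ‖P e‖ ≤ 0 := by linarith [hP.2 e]
  exact norm_le_zero_iff.mp hPe

end IsLProjection

theorem ContinuousLinearMap.range_id_sub_eq_of_range_eq_ker {E F G : Type*}
    [NormedAddCommGroup E] [NormedSpace ℝ E] [AddCommGroup F] [FunLike G E F]
    [AddMonoidHomClass G E F] {P : E →L[ℝ] E} (hP : ∀ e, P (P e) = P e) {R : G} {J : F → E}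
    (hrange : Set.range P = {e | R e = 0}) (hRJ : ∀ y, R (J y) = y) (hPJ : ∀ y, P (J y) = 0) :
    Set.range (ContinuousLinearMap.id ℝ E - P) = Set.range J := by
  apply Set.Subset.antisymm
  · rintro _ ⟨e, rfl⟩
    set d := e - P e - J (R (e - P e))
    have hd : d ∈ Set.range P := by
      rw [hrange]
      simp only [d, Set.mem_ofPred_eq, map_sub, hRJ, sub_self]
    obtain ⟨c, hc⟩ := hd
    have hPd : P d = d := by rw [← hc, hP]
    have hd0 : d = 0 := by
      rw [← hPd]
      simp only [d, map_sub, hP, hPJ, sub_self]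
    exact ⟨R (e - P e), (sub_eq_zero.mp hd0).symm⟩
  · rintro _ ⟨y, rfl⟩
    exact ⟨J y, by simp [hPJ]⟩

noncomputable def restrictToCanonicalImage (E : Type*) [NormedAddCommGroup E] [NormedSpace ℝ E] :
    StrongDual ℝ (StrongDual ℝ (StrongDual ℝ E)) →L[ℝ] StrongDual ℝ E :=
  (ContinuousLinearMap.compL ℝ E (StrongDual ℝ (StrongDual ℝ E)) ℝ).flip
    (inclusionInDoubleDual ℝ E)

section restrictToCanonicalImage

variable {E : Type*} [NormedAddCommGroup E] [NormedSpace ℝ E]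

theorem restrictToCanonicalImage_apply (φ : StrongDual ℝ (StrongDual ℝ (StrongDual ℝ E))) (x : E) :
    restrictToCanonicalImage E φ x = φ (inclusionInDoubleDual ℝ E x) := rfl

theorem norm_restrictToCanonicalImage_le (φ : StrongDual ℝ (StrongDual ℝ (StrongDual ℝ E))) :
    ‖restrictToCanonicalImage E φ‖ ≤ ‖φ‖ :=
  ContinuousLinearMap.opNorm_le_bound _ (norm_nonneg φ) fun x =>
    (φ.le_opNorm _).trans (by gcongr; exact double_dual_bound ℝ E x)

theorem restrictToCanonicalImage_inclusionInDoubleDual (ψ : StrongDual ℝ E) :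
    restrictToCanonicalImage E (inclusionInDoubleDual ℝ (StrongDual ℝ E) ψ) = ψ := by
  ext x
  rfl

end restrictToCanonicalImage

theorem stmt18_general {X : Type*} [NormedAddCommGroup X] [NormedSpace ℝ X] (hX : IsMEmbedded X) : IsLEmbedded (StrongDual ℝ X) := by
  obtain ⟨P, hPidem, hPnorm, hPrange⟩ := hX
  have hP : IsLProjection (E := StrongDual ℝ (StrongDual ℝ (StrongDual ℝ X))) P :=
    ⟨hPidem, hPnorm⟩
  have hrange : Set.range P = {φ | restrictToCanonicalImage X φ = 0} := by
    rw [hPrange]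
    ext φ
    simp only [Set.mem_ofPred_eq, ContinuousLinearMap.ext_iff, restrictToCanonicalImage_apply,
      zero_apply]
  have hRP (φ) : restrictToCanonicalImage X (P φ) = 0 := by
    have : P φ ∈ Set.range P := ⟨φ, rfl⟩
    rwa [hrange] at this
  have hPJ (ψ : StrongDual ℝ X) : P (inclusionInDoubleDual ℝ (StrongDual ℝ X) ψ) = 0 :=
    hP.apply_eq_zero_of_norm_le norm_restrictToCanonicalImage_le hRP
      (by rw [restrictToCanonicalImage_inclusionInDoubleDual]; exact double_dual_bound ℝ _ ψ)
  have hQ := hP.id_sub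
  exact ⟨_, hQ.1, hQ.2, ContinuousLinearMap.range_id_sub_eq_of_range_eq_ker hPidem hrange
    restrictToCanonicalImage_inclusionInDoubleDual hPJ⟩

theorem stmt18 {X : Type*} [NormedAddCommGroup X] [NormedSpace ℝ X] [CompleteSpace X] (hX : IsMEmbedded X) : IsLEmbedded (StrongDual ℝ X) :=
  stmt18_general hX
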